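/- For all 0 < ε ≤ 1, the set T^k_{d,b} of probability tensors expressible as a convex combination of k separable probability tensors admits an ε-cover in ℓ¹-norm of cardinality at most (4bd/ε)^{bdk} · (4k/ε)^k. -/

import Mathlib

/-!
Round every weight vector and every factor to the grid of mesh `1 / M`, truncating all
coordinates but the first, which absorbs the deficit: this moves a probability vector on `b`
letters by at most `2 (b - 1) / M` in `ℓ¹`. For probability vectors the `ℓ¹` distance of two
product tensors is at most the sum of the distances of their factors, and that of two mixtures
at most the distance of the weights plus the largest distance of corresponding components. With
`M_w = ⌊4k/ε⌋` for the weights and `M_p = ⌊4bd/ε⌋` for the factors the total error is at most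
`ε / 2 + ε / 2`, while there are at most `M_w ^ k * M_p ^ (bdk)` grid tensors.
-/

open Finset

/-- `p` is a probability vector: nonnegative entries summing to 1. -/
def IsProbVec {b : ℕ} (p : Fin b → ℝ) : Prop :=
  (∀ i, 0 ≤ p i) ∧ ∑ i, p i = 1

/-- Multi-view probability tensors: convex combinations of `k` separable probability
tensors in `ℝ^{b×⋯×b}` (`d` modes). -/
def MultiViewTensors (d b k : ℕ) : Set ((Fin d → Fin b) → ℝ) :=
  {T | ∃ w : Fin k → ℝ, IsProbVec w ∧ ∃ p : Fin k → Fin d → Fin b → ℝ,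
    (∀ i j, IsProbVec (p i j)) ∧
    T = fun A => ∑ i, w i * ∏ j, p i j (A j)}

lemma IsProbVec.sum_abs {b : ℕ} {p : Fin b → ℝ} (hp : IsProbVec p) : ∑ i, |p i| = 1 := by
  simpa only [abs_of_nonneg (hp.1 _)] using hp.2

lemma IsProbVec.le_one {b : ℕ} {p : Fin b → ℝ} (hp : IsProbVec p) (i : Fin b) : p i ≤ 1 :=
  hp.2 ▸ single_le_sum (fun j _ => hp.1 j) (mem_univ i)

lemma sum_abs_prod_eq_one {d b : ℕ} {p : Fin d → Fin b → ℝ} (hp : ∀ j, IsProbVec (p j)) :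
    ∑ A : Fin d → Fin b, |∏ j, p j (A j)| = 1 := by
  simp only [abs_prod]
  rw [← Fintype.prod_sum fun j a => |p j a|]
  exact prod_eq_one fun j _ => (hp j).sum_abs

lemma sum_abs_mul_sub_mul_le {β : Type*} [Fintype β] (x x' : ℝ) (g g' : β → ℝ) :
    ∑ a, |x * g a - x' * g' a| ≤ |x - x'| * ∑ a, |g a| + |x'| * ∑ a, |g a - g' a| := by
  rw [mul_sum, mul_sum, ← sum_add_distrib]
  refine sum_le_sum fun a _ => ?_
  calc |x * g a - x' * g' a| = |(x - x') * g a + x' * (g a - g' a)| := by ring_nf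
    _ ≤ |x - x'| * |g a| + |x'| * |g a - g' a| := by
      rw [← abs_mul, ← abs_mul]; exact abs_add_le _ _

lemma sum_abs_prod_sub_prod_le {b : ℕ} :
    ∀ {d : ℕ} (p q : Fin d → Fin b → ℝ), (∀ j, IsProbVec (p j)) → (∀ j, IsProbVec (q j)) →
      ∑ A : Fin d → Fin b, |∏ j, p j (A j) - ∏ j, q j (A j)| ≤ ∑ j, ∑ a, |p j a - q j a|
  | 0, _, _, _, _ => by simp
  | d + 1, p, q, hp, hq => by
    have ih := sum_abs_prod_sub_prod_le (fun j => p j.succ) (fun j => q j.succ)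
      (fun j => hp j.succ) (fun j => hq j.succ)
    rw [← (Fin.consEquiv fun _ => Fin b).sum_comp, Fintype.sum_prod_type, Fin.sum_univ_succ]
    simp only [Fin.consEquiv_apply, Fin.prod_univ_succ, Fin.cons_zero, Fin.cons_succ]
    calc _ ≤ ∑ a, (|p 0 a - q 0 a| * 1 +
              |q 0 a| * ∑ j : Fin d, ∑ a, |p j.succ a - q j.succ a|) := by
          refine sum_le_sum fun a _ => ?_
          refine (sum_abs_mul_sub_mul_le _ _ _ _).trans ?_
          rw [sum_abs_prod_eq_one fun j => hp j.succ]
          gcongr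
      _ = _ := by rw [sum_add_distrib, ← sum_mul, ← sum_mul, (hq 0).sum_abs, mul_one, one_mul]

lemma sum_abs_mixture_sub_le {k : ℕ} {β : Type*} [Fintype β] {w w' : Fin k → ℝ}
    {P P' : Fin k → β → ℝ} {D : ℝ} (hw' : IsProbVec w') (hP : ∀ i, ∑ A, |P i A| = 1)
    (hD : ∀ i, ∑ A, |P i A - P' i A| ≤ D) :
    ∑ A, |∑ i, w i * P i A - ∑ i, w' i * P' i A| ≤ ∑ i, |w i - w' i| + D :=
  calc ∑ A, |∑ i, w i * P i A - ∑ i, w' i * P' i A|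
      ≤ ∑ i, ∑ A, |w i * P i A - w' i * P' i A| := by
        rw [sum_comm]
        gcongr with A
        rw [← sum_sub_distrib]
        exact abs_sum_le_sum_abs _ _
    _ ≤ ∑ i, (|w i - w' i| * 1 + |w' i| * D) := by
        gcongr with i
        refine (sum_abs_mul_sub_mul_le _ _ _ _).trans ?_
        rw [hP i]
        gcongr
        exact hD i
    _ = ∑ i, |w i - w' i| + D := by
        rw [sum_add_distrib, ← sum_mul, ← sum_mul, hw'.sum_abs, mul_one, one_mul]

lemma sum_abs_sub_le_of_sum_eq {ι : Type*} [Fintype ι] [DecidableEq ι] {p q : ι → ℝ} {δ : ℝ}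
    (i₀ : ι) (hsum : ∑ i, q i = ∑ i, p i) (hle : ∀ i ≠ i₀, q i ≤ p i)
    (hclose : ∀ i ≠ i₀, p i ≤ q i + δ) :
    ∑ i, |p i - q i| ≤ 2 * (Fintype.card ι - 1) * δ := by
  have hdiff : q i₀ - p i₀ = ∑ i ∈ univ.erase i₀, (p i - q i) := by
    rw [← add_sum_erase _ _ (mem_univ i₀), ← add_sum_erase _ p (mem_univ i₀)] at hsum
    rw [sum_sub_distrib]
    linarith
  have hoff : ∑ i ∈ univ.erase i₀, |p i - q i| = ∑ i ∈ univ.erase i₀, (p i - q i) :=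
    sum_congr rfl fun i hi => abs_of_nonneg (sub_nonneg.2 (hle i (ne_of_mem_erase hi)))
  have hcard : ((univ.erase i₀).card : ℝ) = Fintype.card ι - 1 := by
    rw [card_erase_of_mem (mem_univ _), card_univ, Nat.cast_pred (Fintype.card_pos_iff.2 ⟨i₀⟩)]
  calc ∑ i, |p i - q i| = 2 * ∑ i ∈ univ.erase i₀, (p i - q i) := by
        rw [← add_sum_erase _ _ (mem_univ i₀), hoff, abs_sub_comm, hdiff,
          abs_of_nonneg (sum_nonneg fun i hi => sub_nonneg.2 (hle i (ne_of_mem_erase hi)))]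
        ring
    _ ≤ 2 * ∑ i ∈ univ.erase i₀, δ := by
        gcongr with i hi
        linarith [hclose i (ne_of_mem_erase hi)]
    _ = 2 * (Fintype.card ι - 1) * δ := by rw [sum_const, nsmul_eq_mul, hcard, mul_assoc]

section Grid

variable {b : ℕ}

noncomputable def roundIdx {M : ℕ} (hM : 0 < M) (p : Fin b → ℝ) : Fin b → Fin M :=
  fun i => ⟨min ⌊p i * M⌋₊ (M - 1), (min_le_right _ _).trans_lt (Nat.sub_lt hM one_pos)⟩

lemma roundIdx_div_le {M : ℕ} (hM : 0 < M) {p : Fin b → ℝ} (hp : ∀ i, 0 ≤ p i) (i : Fin b) :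
    (roundIdx hM p i : ℝ) / M ≤ p i := by
  have hMR : (0 : ℝ) < M := Nat.cast_pos.2 hM
  rw [div_le_iff₀ hMR]
  calc ((min ⌊p i * M⌋₊ (M - 1) : ℕ) : ℝ) ≤ ⌊p i * M⌋₊ := by gcongr; exact min_le_left _ _
    _ ≤ p i * M := Nat.floor_le (by have := hp i; positivity)

lemma le_roundIdx_div_add {M : ℕ} (hM : 0 < M) {p : Fin b → ℝ} (hp : ∀ i, p i ≤ 1) (i : Fin b) :
    p i ≤ (roundIdx hM p i : ℝ) / M + 1 / M := by
  have hMR : (0 : ℝ) < M := Nat.cast_pos.2 hM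
  rw [← add_div, le_div_iff₀ hMR]
  have hround : p i * M - 1 ≤ ((min ⌊p i * M⌋₊ (M - 1) : ℕ) : ℝ) := by
    rw [Nat.cast_min, Nat.cast_pred hM, le_min_iff]
    exact ⟨(Nat.sub_one_lt_floor _).le, by nlinarith [hp i]⟩
  simp only [roundIdx]
  linarith

variable [NeZero b]

/-- The entry `n 0` is ignored. The fallback branch only makes the map total: rounded codes
never reach it. -/
noncomputable def gridVec (M : ℕ) (n : Fin b → Fin M) : Fin b → ℝ :=
  if ∑ i ∈ univ.erase 0, (n i : ℝ) / M ≤ 1 then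
    Function.update (fun i => (n i : ℝ) / M) 0 (1 - ∑ i ∈ univ.erase 0, (n i : ℝ) / M)
  else Pi.single 0 1

lemma gridVec_isProbVec (M : ℕ) (n : Fin b → Fin M) : IsProbVec (gridVec M n) := by
  unfold gridVec
  split_ifs with h
  · refine ⟨fun i => ?_, ?_⟩
    · rcases eq_or_ne i 0 with rfl | hi
      · simpa using h
      · rw [Function.update_of_ne hi]; positivity
    · rw [sum_update_of_mem (mem_univ _), sdiff_singleton_eq_erase, sub_add_cancel]
  · refine ⟨fun i => ?_, by simp⟩
    rcases eq_or_ne i 0 with rfl | hi <;> simp [*]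

lemma sum_abs_sub_gridVec_roundIdx_le {M : ℕ} (hM : 0 < M) {p : Fin b → ℝ} (hp : IsProbVec p) :
    ∑ i, |p i - gridVec M (roundIdx hM p) i| ≤ 2 * (b - 1) / M := by
  have hfits : ∑ i ∈ univ.erase 0, (roundIdx hM p i : ℝ) / M ≤ 1 :=
    calc ∑ i ∈ univ.erase 0, (roundIdx hM p i : ℝ) / M ≤ ∑ i, p i :=
          (sum_le_sum fun i _ => roundIdx_div_le hM hp.1 i).trans
            (sum_le_sum_of_subset_of_nonneg (erase_subset _ _) fun j _ _ => hp.1 j)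
      _ = 1 := hp.2
  have hoff : ∀ i ≠ 0, gridVec M (roundIdx hM p) i = (roundIdx hM p i : ℝ) / M := fun i hi => by
    rw [gridVec, if_pos hfits, Function.update_of_ne hi]
  have h := sum_abs_sub_le_of_sum_eq (p := p) (q := gridVec M (roundIdx hM p)) (δ := 1 / M) 0
    (by rw [(gridVec_isProbVec M _).2, hp.2])
    (fun i hi => hoff i hi ▸ roundIdx_div_le hM hp.1 i)
    (fun i hi => hoff i hi ▸ le_roundIdx_div_add hM hp.le_one i)
  rwa [Fintype.card_fin, mul_one_div] at h

end Grid

section GridTensor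

abbrev GridCode (d b k Mw Mp : ℕ) : Type := (Fin k → Fin Mw) × (Fin k → Fin d → Fin b → Fin Mp)

lemma card_gridCode (d b k Mw Mp : ℕ) :
    Fintype.card (GridCode d b k Mw Mp) = Mw ^ k * Mp ^ (b * d * k) := by
  simp only [Fintype.card_prod, Fintype.card_fun, Fintype.card_fin, ← pow_mul]

variable {d b k : ℕ} [NeZero b] [NeZero k]

noncomputable def gridTensor (Mw Mp : ℕ) (x : GridCode d b k Mw Mp) : (Fin d → Fin b) → ℝ :=
  fun A => ∑ i, gridVec Mw x.1 i * ∏ j, gridVec Mp (x.2 i j) (A j)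

lemma gridTensor_mem (Mw Mp : ℕ) (x : GridCode d b k Mw Mp) :
    gridTensor Mw Mp x ∈ MultiViewTensors d b k :=
  ⟨gridVec Mw x.1, gridVec_isProbVec _ _, fun i j => gridVec Mp (x.2 i j),
    fun _ _ => gridVec_isProbVec _ _, rfl⟩

lemma exists_gridTensor_close {Mw Mp : ℕ} (hMw : 0 < Mw) (hMp : 0 < Mp)
    {T : (Fin d → Fin b) → ℝ} (hT : T ∈ MultiViewTensors d b k) :
    ∃ x : GridCode d b k Mw Mp,
      ∑ A, |T A - gridTensor Mw Mp x A| ≤ 2 * (k - 1) / Mw + d * (2 * (b - 1) / Mp) := by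
  obtain ⟨w, hw, p, hp, rfl⟩ := hT
  refine ⟨(roundIdx hMw w, fun i j => roundIdx hMp (p i j)), ?_⟩
  have hfactors : ∀ i, ∑ A : Fin d → Fin b,
      |∏ j, p i j (A j) - ∏ j, gridVec Mp (roundIdx hMp (p i j)) (A j)| ≤ d * (2 * (b - 1) / Mp) :=
    fun i => calc
      _ ≤ ∑ j, ∑ a, |p i j a - gridVec Mp (roundIdx hMp (p i j)) a| :=
        sum_abs_prod_sub_prod_le _ _ (hp i) fun _ => gridVec_isProbVec _ _
      _ ≤ ∑ _j : Fin d, 2 * ((b : ℝ) - 1) / Mp :=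
        sum_le_sum fun j _ => sum_abs_sub_gridVec_roundIdx_le hMp (hp i j)
      _ = d * (2 * (b - 1) / Mp) := by simp
  calc _ ≤ ∑ i, |w i - gridVec Mw (roundIdx hMw w) i| + d * (2 * (b - 1) / Mp) :=
        sum_abs_mixture_sub_le (gridVec_isProbVec _ _) (fun i => sum_abs_prod_eq_one (hp i))
          hfactors
    _ ≤ _ := by grw [sum_abs_sub_gridVec_roundIdx_le hMw hw]

end GridTensor

lemma floor_four_mul_div_pos {c ε : ℝ} (hc : 1 ≤ c) (hε : 0 < ε) (hε4 : ε ≤ 4) :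
    0 < ⌊4 * c / ε⌋₊ :=
  Nat.floor_pos.2 <| (le_div_iff₀ hε).2 (by linarith)

lemma two_mul_sub_one_div_floor_le {c ε : ℝ} (hc : 1 ≤ c) (hε : 0 < ε) (hε4 : ε ≤ 4) :
    2 * (c - 1) / ⌊4 * c / ε⌋₊ ≤ ε / 2 := by
  have hM : (0 : ℝ) < ⌊4 * c / ε⌋₊ := Nat.cast_pos.2 (floor_four_mul_div_pos hc hε hε4)
  have hfloor : 4 * c - ε < ε * ⌊4 * c / ε⌋₊ := by
    have := Nat.sub_one_lt_floor (4 * c / ε)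
    rw [div_sub_one hε.ne', div_lt_iff₀ hε] at this
    linarith
  rw [div_le_div_iff₀ hM two_pos]
  linarith

theorem multiview_tensor_cover (d b k : ℕ) (hd : 0 < d) (hb : 0 < b) (hk : 0 < k)
    (ε : ℝ) (hε : 0 < ε) (hε1 : ε ≤ 1) :
    ∃ S : Finset ((Fin d → Fin b) → ℝ),
      (∀ T ∈ S, T ∈ MultiViewTensors d b k) ∧
      (S.card : ℝ) ≤ (4 * b * d / ε) ^ (b * d * k) * (4 * k / ε) ^ k ∧
      ∀ T ∈ MultiViewTensors d b k, ∃ T' ∈ S, ∑ A, |T A - T' A| ≤ ε := by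
  have : NeZero b := ⟨hb.ne'⟩
  have : NeZero k := ⟨hk.ne'⟩
  have hε4 : ε ≤ 4 := by linarith
  have hk1 : (1 : ℝ) ≤ k := Nat.one_le_cast.2 hk
  have hbd1 : (1 : ℝ) ≤ b * d := by exact_mod_cast Nat.mul_pos hb hd
  rw [mul_assoc 4 (b : ℝ)]
  set Mw := ⌊4 * (k : ℝ) / ε⌋₊
  set Mp := ⌊4 * ((b : ℝ) * d) / ε⌋₊
  refine ⟨(univ : Finset (GridCode d b k Mw Mp)).image (gridTensor Mw Mp), ?_, ?_, fun T hT => ?_⟩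
  · exact forall_mem_image.2 fun x _ => gridTensor_mem Mw Mp x
  · calc (((univ : Finset (GridCode d b k Mw Mp)).image (gridTensor Mw Mp)).card : ℝ)
        ≤ Fintype.card (GridCode d b k Mw Mp) := mod_cast card_image_le
      _ = (Mp : ℝ) ^ (b * d * k) * (Mw : ℝ) ^ k := by rw [card_gridCode]; push_cast; ring
      _ ≤ _ := by gcongr <;> exact Nat.floor_le (by positivity)
  · obtain ⟨x, hx⟩ := exists_gridTensor_close (floor_four_mul_div_pos hk1 hε hε4)
      (floor_four_mul_div_pos hbd1 hε hε4) hT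
    refine ⟨_, mem_image_of_mem _ (mem_univ x), hx.trans ?_⟩
    have hd1 : (1 : ℝ) ≤ d := Nat.one_le_cast.2 hd
    have hfactors : (d : ℝ) * (2 * (b - 1) / Mp) ≤ 2 * (b * d - 1) / Mp := by
      rw [mul_div_assoc']; exact div_le_div_of_nonneg_right (by linarith) (Nat.cast_nonneg _)
    linarith [two_mul_sub_one_div_floor_le hk1 hε hε4, two_mul_sub_one_div_floor_le hbd1 hε hε4]
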